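/- Fix gains k₁, k₂ > 0 and h ∈ {−1,1}, and let V(q,h) = 2(1 − hη) + (η')² + ‖μ'‖². Along the closed-loop vector field η̇ = ½k₁h‖μ‖², μ̇ = −½k₁hη μ, η̇' = ½(k₁h + k₂η)(μ·μ'), μ̇' = ½((k₁h − k₂η)(μ×μ') − k₁hη'μ − k₂η²μ'), the derivative of V satisfies V̇ = −2hη̇ + 2η'η̇' + 2μ'·μ̇' = −k₁‖μ‖² − k₂η²(η')² − k₂η²‖μ'‖² ≤ 0; moreover, for q a unit dual quaternion, V̇ = 0 if and only if q = ±1. -/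
import Mathlib


noncomputable section

/-- Euclidean dot product in `ℝ³`. -/
def dot3 (u v : Fin 3 → ℝ) : ℝ := u 0 * v 0 + u 1 * v 1 + u 2 * v 2

/-- Along the closed-loop vector field, the derivative of the Lyapunov function
`V(q,h) = 2(1 − hη) + (η')² + ‖μ'‖²` satisfies
`V̇ = −2hη̇ + 2η'η̇' + 2μ'·μ̇' = −k₁‖μ‖² − k₂η²(η')² − k₂η²‖μ'‖² ≤ 0`, and for a unit
dual quaternion `V̇ = 0` iff `q = ±1`. -/
theorem Vdot_negative_semidefinite (k₁ k₂ h η η' : ℝ) (μ μ' : Fin 3 → ℝ)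
    (hk₁ : 0 < k₁) (hk₂ : 0 < k₂) (hh : h = 1 ∨ h = -1)
    (hunit : η ^ 2 + dot3 μ μ = 1) (hconstr : η * η' + dot3 μ μ' = 0) :
    let ηdot := (1 / 2) * k₁ * h * dot3 μ μ
    let μdot := (-(1 / 2) * k₁ * h * η) • μ
    let η'dot := (1 / 2) * (k₁ * h + k₂ * η) * dot3 μ μ'
    let μ'dot := (1 / 2 : ℝ) • ((k₁ * h - k₂ * η) • (crossProduct μ μ') -
      (k₁ * h * η') • μ - (k₂ * η ^ 2) • μ')
    let Vdot := -2 * h * ηdot + 2 * η' * η'dot + 2 * dot3 μ' μ'dot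
    Vdot = -(k₁ * dot3 μ μ) - k₂ * η ^ 2 * η' ^ 2 - k₂ * η ^ 2 * dot3 μ' μ' ∧
    Vdot ≤ 0 ∧
    (Vdot = 0 ↔ ((η = 1 ∨ η = -1) ∧ μ = 0 ∧ η' = 0 ∧ μ' = 0)) := by
  intro ηdot μdot η'dot μ'dot Vdot
  have hμμ : 0 ≤ dot3 μ μ := by
    simp only [dot3]; nlinarith [sq_nonneg (μ 0), sq_nonneg (μ 1), sq_nonneg (μ 2)]
  have hμ'μ' : 0 ≤ dot3 μ' μ' := by
    simp only [dot3]; nlinarith [sq_nonneg (μ' 0), sq_nonneg (μ' 1), sq_nonneg (μ' 2)]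
  have t1 : 0 ≤ k₁ * dot3 μ μ := mul_nonneg hk₁.le hμμ
  have t2 : 0 ≤ k₂ * η ^ 2 * η' ^ 2 :=
    mul_nonneg (mul_nonneg hk₂.le (sq_nonneg η)) (sq_nonneg η')
  have t3 : 0 ≤ k₂ * η ^ 2 * dot3 μ' μ' :=
    mul_nonneg (mul_nonneg hk₂.le (sq_nonneg η)) hμ'μ'
  have key : Vdot = -(k₁ * dot3 μ μ) - k₂ * η ^ 2 * η' ^ 2 - k₂ * η ^ 2 * dot3 μ' μ' := by
    simp only [Vdot, ηdot, η'dot, μ'dot, dot3, crossProduct] at *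
    rcases hh with rfl | rfl <;>
    · simp only [LinearMap.mk₂_apply, Pi.smul_apply, Pi.sub_apply, smul_eq_mul,
        Matrix.cons_val_zero, Matrix.cons_val_one, Matrix.head_cons,
        Matrix.cons_val_two, Matrix.tail_cons] at *
      linear_combination (k₂ * η * η') * hconstr
  refine ⟨key, by rw [key]; linarith, ?_⟩
  rw [key]
  constructor
  · intro h0
    have hμz : dot3 μ μ = 0 := by
      have h1 : k₁ * dot3 μ μ = 0 := by linarith
      exact (mul_eq_zero.mp h1).resolve_left hk₁.ne'
    have hη2 : η ^ 2 = 1 := by linarith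
    have hη'0 : η' = 0 := by
      have h1 : k₂ * η ^ 2 * η' ^ 2 = 0 := by linarith
      rw [hη2, mul_one] at h1
      have h2 : η' ^ 2 = 0 := (mul_eq_zero.mp h1).resolve_left hk₂.ne'
      exact pow_eq_zero_iff (two_ne_zero) |>.mp h2
    have hμ'z : dot3 μ' μ' = 0 := by
      have h1 : k₂ * η ^ 2 * dot3 μ' μ' = 0 := by linarith
      rw [hη2, mul_one] at h1
      exact (mul_eq_zero.mp h1).resolve_left hk₂.ne'
    have sq3 : ∀ v : Fin 3 → ℝ, dot3 v v = 0 → v = 0 := by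
      intro v hv
      simp only [dot3] at hv
      have h0' : v 0 = 0 ∧ v 1 = 0 ∧ v 2 = 0 := by
        refine ⟨?_, ?_, ?_⟩ <;>
          nlinarith [sq_nonneg (v 0), sq_nonneg (v 1), sq_nonneg (v 2)]
      funext i
      fin_cases i
      · exact h0'.1
      · exact h0'.2.1
      · exact h0'.2.2
    refine ⟨?_, sq3 μ hμz, hη'0, sq3 μ' hμ'z⟩
    have h1 : (η - 1) * (η + 1) = 0 := by nlinarith
    rcases mul_eq_zero.mp h1 with h2 | h2
    · exact Or.inl (by linarith)
    · exact Or.inr (by linarith)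
  · rintro ⟨hη, rfl, rfl, rfl⟩
    have hz : dot3 (0 : Fin 3 → ℝ) 0 = 0 := by simp [dot3]
    rw [hz]
    rcases hη with rfl | rfl <;> ring
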